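/- arXiv:1504.05913 — 4 statements merged into one kernel-verified Lean document; each statement's English description precedes it below -/
import Mathlib

section
/- Let δ₁ and δ₂ be quasi-trivial parameters on ℝ^(2D) and define the matrix-valued functions (b_i)_M{}^N := ∂_M δ_i^N for i = 1, 2. Then at every point all four products b₁·b₂, b₁·t(b₂), t(b₁)·b₂, and t(b₁)·t(b₂) are the zero matrix, where t denotes the η-transpose. -/
open scoped BigOperators

/-- Index set of the doubled space ℝ^(2D). -/
abbrev DoubledIdx (D : ℕ) := Fin D ⊕ Fin D

/-- The doubled space ℝ^(2D). -/
abbrev DoubledSpace (D : ℕ) := DoubledIdx D → ℝ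

/-- Partial derivative ∂_N f at x. -/
noncomputable def pd {D : ℕ} (f : DoubledSpace D → ℝ) (N : DoubledIdx D)
    (x : DoubledSpace D) : ℝ :=
  fderiv ℝ f x (Pi.single N 1)

/-- The constant O(D,D) metric η. -/
def eta (D : ℕ) : DoubledIdx D → DoubledIdx D → ℝ
  | Sum.inl i, Sum.inr j => if i = j then 1 else 0
  | Sum.inr i, Sum.inl j => if i = j then 1 else 0
  | _, _ => 0

/-- Raised-index partial derivative ∂^M f := Σ_N η^{MN} ∂_N f. -/
noncomputable def pdUp {D : ℕ} (f : DoubledSpace D → ℝ) (M : DoubledIdx D)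
    (x : DoubledSpace D) : ℝ :=
  ∑ N, eta D M N * pd f N x

/-- A constrained function: smooth and depending only on the first (inl) block. -/
def IsConstrained {D : ℕ} (f : DoubledSpace D → ℝ) : Prop :=
  ContDiff ℝ (⊤ : ℕ∞) f ∧
    ∀ x y : DoubledSpace D, (∀ i, x (Sum.inl i) = y (Sum.inl i)) → f x = f y

/-- A parameter (generalized vector field) on the doubled space, components ξ^M. -/
abbrev Param (D : ℕ) := DoubledIdx D → DoubledSpace D → ℝ

/-- A constrained parameter: all components constrained. -/
def IsConstrainedParam {D : ℕ} (ξ : Param D) : Prop := ∀ M, IsConstrained (ξ M)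

/-- A quasi-trivial parameter: δ^M = Σ_i ρ_i ∂^M σ_i. -/
def IsQuasiTrivial {D : ℕ} (δ : Param D) : Prop :=
  ∃ (r : ℕ) (ρ σ : Fin r → (DoubledSpace D → ℝ)),
    (∀ i, IsConstrained (ρ i)) ∧ (∀ i, IsConstrained (σ i)) ∧
    ∀ M x, δ M x = ∑ i, ρ i x * pdUp (σ i) M x

/-- ∂^M ξ_P := Σ_{Q,R} η^{MQ} η_{PR} ∂_Q ξ^R. -/
noncomputable def pdUpLow {D : ℕ} (ξ : Param D) (M P : DoubledIdx D)
    (x : DoubledSpace D) : ℝ :=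
  ∑ Q, ∑ R, eta D M Q * eta D P R * pd (ξ R) Q x

/-- Generalized Lie derivative (L̂_ξ V)_M. -/
noncomputable def glie {D : ℕ} (ξ V : Param D) : Param D :=
  fun M x => (∑ P, ξ P x * pd (V M) P x)
    + ∑ K, (pd (ξ K) M x - pdUpLow ξ K M x) * V K x

/-- η-transpose of a matrix: t(X)_M{}^N := Σ_{P,Q} η_{MP} η^{NQ} X_Q{}^P. -/
def etaT {D : ℕ} (X : Matrix (DoubledIdx D) (DoubledIdx D) ℝ) :
    Matrix (DoubledIdx D) (DoubledIdx D) ℝ :=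
  Matrix.of fun M N => ∑ P, ∑ Q, eta D M P * eta D N Q * X Q P

/-- The C-bracket of two parameters. -/
noncomputable def cbracket {D : ℕ} (ξ₁ ξ₂ : Param D) : Param D :=
  fun M x => (∑ P, ξ₁ P x * pd (ξ₂ M) P x) - (∑ P, ξ₂ P x * pd (ξ₁ M) P x)
    - (1/2) * ∑ P, (ξ₁ P x * pdUpLow ξ₂ M P x - ξ₂ P x * pdUpLow ξ₁ M P x)

/-- Directional derivative (ξ·∂)f. -/
noncomputable def xid {D : ℕ} (ξ : Param D) (f : DoubledSpace D → ℝ)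
    (x : DoubledSpace D) : ℝ :=
  ∑ P, ξ P x * pd f P x

/-- Iterated directional derivative (ξ·∂)^n f. -/
noncomputable def xidIter {D : ℕ} (ξ : Param D) : ℕ → (DoubledSpace D → ℝ) →
    DoubledSpace D → ℝ
  | 0, f => f
  | n+1, f => xid ξ (xidIter ξ n f)

-- fderiv of a constrained function only depends on inl coordinates
lemma fderiv_constrained_congr {D : ℕ} {f : DoubledSpace D → ℝ} (hf : IsConstrained f)
    {x y : DoubledSpace D} (hxy : ∀ i, x (Sum.inl i) = y (Sum.inl i)) :
    fderiv ℝ f x = fderiv ℝ f y := by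
  have hdiff : Differentiable ℝ f := hf.1.differentiable (by simp)
  have hxeq : x + (y - x) = y := by abel
  have hT : HasFDerivAt (fun z : DoubledSpace D => z + (y - x))
      (ContinuousLinearMap.id ℝ (DoubledSpace D)) x :=
    (hasFDerivAt_id x).add_const _
  have h1 : HasFDerivAt f (fderiv ℝ f y) (x + (y - x)) := by
    rw [hxeq]; exact (hdiff y).hasFDerivAt
  have hcomp := h1.comp x hT
  have hfun : (fun z : DoubledSpace D => f (z + (y - x))) = f := by
    funext z
    exact hf.2 _ _ (fun i => by simp [hxy i])
  simp only [Function.comp_def] at hcomp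
  rw [hfun] at hcomp
  simpa using hcomp.fderiv

lemma pd_inr_eq_zero {D : ℕ} {f : DoubledSpace D → ℝ} (hf : IsConstrained f)
    (j : Fin D) (x : DoubledSpace D) : pd f (Sum.inr j) x = 0 := by
  set v : DoubledSpace D := Pi.single (Sum.inr j) 1 with hv
  have hd : DifferentiableAt ℝ f x := (hf.1.differentiable (by simp)) x
  have hc : HasDerivAt (fun t : ℝ => x + t • v) v 0 := by
    simpa using ((hasDerivAt_id (0 : ℝ)).smul_const v).const_add x
  have h1 : HasFDerivAt f (fderiv ℝ f x) (x + (0:ℝ) • v) := by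
    simpa using hd.hasFDerivAt
  have hcomp : HasDerivAt (fun t : ℝ => f (x + t • v)) (fderiv ℝ f x v) 0 :=
    h1.comp_hasDerivAt 0 hc
  have hfun : (fun t : ℝ => f (x + t • v)) = fun _ => f x := by
    funext t
    refine hf.2 _ _ (fun i => ?_)
    have : v (Sum.inl i) = 0 := by
      simp [hv, Pi.single_eq_of_ne (by simp : (Sum.inl i : DoubledIdx D) ≠ Sum.inr j)]
    simp [this]
  rw [hfun] at hcomp
  exact hcomp.unique (hasDerivAt_const _ _)

lemma isConstrained_pd {D : ℕ} {f : DoubledSpace D → ℝ} (hf : IsConstrained f)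
    (Q : DoubledIdx D) : IsConstrained (fun x => pd f Q x) := by
  constructor
  · have h1 : ContDiff ℝ (⊤ : ℕ∞) (fun x => fderiv ℝ f x) := hf.1.fderiv_right (by simp)
    exact (h1.clm_apply contDiff_const :)
  · intro x y hxy
    simp [pd, fderiv_constrained_congr hf hxy]

lemma isConstrained_qt_comp {D : ℕ} {δ : Param D} (h : IsQuasiTrivial δ)
    (N : DoubledIdx D) : IsConstrained (δ N) := by
  obtain ⟨r, ρ, σ, hρ, hσ, hδ⟩ := h
  have hfun : δ N = fun x => ∑ i, ρ i x * ∑ Q, eta D N Q * pd (σ i) Q x := by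
    funext x; simp [hδ N x, pdUp]
  rw [hfun]
  constructor
  · apply ContDiff.sum; intro i _
    exact (hρ i).1.mul (ContDiff.sum fun Q _ =>
      contDiff_const.mul (isConstrained_pd (hσ i) Q).1)
  · intro x y hxy
    refine Finset.sum_congr rfl fun i _ => ?_
    rw [(hρ i).2 x y hxy]
    congr 1
    refine Finset.sum_congr rfl fun Q _ => ?_
    rw [show pd (σ i) Q x = pd (σ i) Q y from (isConstrained_pd (hσ i) Q).2 x y hxy]

lemma qt_inl_eq_zero {D : ℕ} {δ : Param D} (h : IsQuasiTrivial δ)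
    (n : Fin D) : δ (Sum.inl n) = fun _ => 0 := by
  obtain ⟨r, ρ, σ, hρ, hσ, hδ⟩ := h
  funext x
  rw [hδ]
  refine Finset.sum_eq_zero fun i _ => ?_
  have : pdUp (σ i) (Sum.inl n) x = 0 := by
    refine Finset.sum_eq_zero fun Q _ => ?_
    rcases Q with q | q
    · simp [eta]
    · rcases eq_or_ne n q with rfl | hq
      · simp [eta, pd_inr_eq_zero (hσ i)]
      · simp [eta, hq]
  simp [this]

-- support of b: rows only inl, columns only inr
lemma b_col_inl {D : ℕ} {δ : Param D} (h : IsQuasiTrivial δ)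
    (x : DoubledSpace D) (M : DoubledIdx D) (n : Fin D) :
    pd (δ (Sum.inl n)) M x = 0 := by
  rw [qt_inl_eq_zero h n]
  simp [pd]

lemma b_row_inr {D : ℕ} {δ : Param D} (h : IsQuasiTrivial δ)
    (x : DoubledSpace D) (m : Fin D) (N : DoubledIdx D) :
    pd (δ N) (Sum.inr m) x = 0 :=
  pd_inr_eq_zero (isConstrained_qt_comp h N) m x

-- etaT preserves the support pattern
lemma etaT_col_inl {D : ℕ} {X : Matrix (DoubledIdx D) (DoubledIdx D) ℝ}
    (hrow : ∀ m N, X (Sum.inr m) N = 0) (M : DoubledIdx D) (n : Fin D) :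
    etaT X M (Sum.inl n) = 0 := by
  unfold etaT
  simp only [Matrix.of_apply]
  refine Finset.sum_eq_zero fun P _ => Finset.sum_eq_zero fun Q _ => ?_
  rcases Q with q | q
  · simp [eta]
  · simp [hrow q P]

lemma etaT_row_inr {D : ℕ} {X : Matrix (DoubledIdx D) (DoubledIdx D) ℝ}
    (hcol : ∀ M n, X M (Sum.inl n) = 0) (m : Fin D) (N : DoubledIdx D) :
    etaT X (Sum.inr m) N = 0 := by
  unfold etaT
  simp only [Matrix.of_apply]
  refine Finset.sum_eq_zero fun P _ => Finset.sum_eq_zero fun Q _ => ?_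
  rcases P with p | p
  · simp [hcol Q p]
  · simp [eta]

lemma mul_eq_zero_of_pattern {D : ℕ} {X Y : Matrix (DoubledIdx D) (DoubledIdx D) ℝ}
    (hX : ∀ M n, X M (Sum.inl n) = 0) (hY : ∀ m N, Y (Sum.inr m) N = 0) :
    X * Y = 0 := by
  ext M N
  rw [Matrix.mul_apply]
  refine Finset.sum_eq_zero fun P _ => ?_
  rcases P with p | p
  · simp [hX M p]
  · simp [hY p N]

/-- For quasi-trivial parameters δ₁, δ₂ with b_i = ∂δ_i, all four products
b₁·b₂, b₁·t(b₂), t(b₁)·b₂, t(b₁)·t(b₂) vanish. -/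
theorem stmt_3 {D : ℕ} (δ₁ δ₂ : Param D)
    (h₁ : IsQuasiTrivial δ₁) (h₂ : IsQuasiTrivial δ₂)
    (x : DoubledSpace D)
    (b₁ b₂ : Matrix (DoubledIdx D) (DoubledIdx D) ℝ)
    (hb₁ : b₁ = Matrix.of fun M N => pd (δ₁ N) M x)
    (hb₂ : b₂ = Matrix.of fun M N => pd (δ₂ N) M x) :
    b₁ * b₂ = 0 ∧ b₁ * etaT b₂ = 0 ∧ etaT b₁ * b₂ = 0 ∧ etaT b₁ * etaT b₂ = 0 := by
  have c1 : ∀ M n, b₁ M (Sum.inl n) = 0 := by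
    subst hb₁; intro M n; exact b_col_inl h₁ x M n
  have r1 : ∀ m N, b₁ (Sum.inr m) N = 0 := by
    subst hb₁; intro m N; exact b_row_inr h₁ x m N
  have c2 : ∀ M n, b₂ M (Sum.inl n) = 0 := by
    subst hb₂; intro M n; exact b_col_inl h₂ x M n
  have r2 : ∀ m N, b₂ (Sum.inr m) N = 0 := by
    subst hb₂; intro m N; exact b_row_inr h₂ x m N
  exact ⟨mul_eq_zero_of_pattern c1 r2,
    mul_eq_zero_of_pattern c1 (etaT_row_inr c2),
    mul_eq_zero_of_pattern (etaT_col_inl r1) r2,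
    mul_eq_zero_of_pattern (etaT_col_inl r1) (etaT_row_inr c2)⟩
end

section
/- Let δ₁, …, δ_r be finitely many quasi-trivial parameters on ℝ^(2D), set b_i := ∂δ_i (the matrix (b_i)_M{}^N = ∂_M δ_i^N) and G_i := 1 + b_i − t(b_i), where t is the η-transpose and 1 is the identity matrix. Then at every point the ordered product G₁·G₂·⋯·G_r equals 1 + Σ_{i=1}^r (b_i − t(b_i)), which also equals the matrix exponential exp(Σ_{i=1}^r (b_i − t(b_i))). (This is the statement G(δ₁)G(δ₂)⋯ = G(δ₁ + δ₂ + ⋯) for quasi-trivial parameters.) -/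
open scoped BigOperators

section AuxStmt5

/-- pd in an `inr` direction vanishes for functions depending only on `inl`. -/
lemma aux_pd_inr_zero {D : ℕ} {f : DoubledSpace D → ℝ} {x : DoubledSpace D}
    (hdiff : DifferentiableAt ℝ f x)
    (hdep : ∀ z w : DoubledSpace D, (∀ i, z (Sum.inl i) = w (Sum.inl i)) → f z = f w)
    (j : Fin D) : pd f (Sum.inr j) x = 0 := by
  set e : DoubledSpace D := Pi.single (Sum.inr j) 1 with he
  have hc : HasDerivAt (fun t : ℝ => x + t • e) e 0 := by
    simpa using ((hasDerivAt_id (0:ℝ)).smul_const e).const_add x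
  have h0 : x + (0:ℝ) • e = x := by simp
  have h2 : HasDerivAt (fun t : ℝ => f (x + t • e)) (fderiv ℝ f x e) 0 := by
    have := (h0 ▸ hdiff).hasFDerivAt.comp_hasDerivAt 0 hc
    rw [h0] at this
    exact this
  have h3 : (fun t : ℝ => f (x + t • e)) = fun _ => f x := by
    funext t
    refine hdep _ _ fun i => ?_
    simp [he, Pi.single_eq_of_ne (show (Sum.inl i : DoubledIdx D) ≠ Sum.inr j by simp)]
  rw [h3] at h2
  have := h2.unique (hasDerivAt_const 0 (f x))
  rw [pd, he] at *
  exact this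

/-- Projection onto the `inl` block, as a continuous linear map. -/
noncomputable def auxProjCLM (D : ℕ) : DoubledSpace D →L[ℝ] DoubledSpace D :=
  ContinuousLinearMap.pi fun M =>
    match M with
    | Sum.inl i => ContinuousLinearMap.proj (Sum.inl i)
    | Sum.inr _ => 0

@[simp] lemma auxProjCLM_inl {D : ℕ} (y : DoubledSpace D) (i : Fin D) :
    auxProjCLM D y (Sum.inl i) = y (Sum.inl i) := rfl

/-- pd of a constrained-style function depends only on the `inl` block. -/
lemma aux_pd_congr_inl {D : ℕ} {f : DoubledSpace D → ℝ}
    (hf : ContDiff ℝ (⊤ : ℕ∞) f)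
    (hdep : ∀ z w : DoubledSpace D, (∀ i, z (Sum.inl i) = w (Sum.inl i)) → f z = f w)
    (N : DoubledIdx D) {z w : DoubledSpace D}
    (hzw : ∀ i, z (Sum.inl i) = w (Sum.inl i)) : pd f N z = pd f N w := by
  have hfe : f = f ∘ (auxProjCLM D) := by
    funext y
    exact (hdep _ _ fun i => auxProjCLM_inl y i).symm
  have hder : ∀ u : DoubledSpace D,
      fderiv ℝ f u = (fderiv ℝ f (auxProjCLM D u)).comp
        (auxProjCLM D : DoubledSpace D →L[ℝ] DoubledSpace D) := by
    intro u
    conv_lhs => rw [hfe]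
    rw [fderiv_comp u (hf.differentiable (by simp) _) ((auxProjCLM D).differentiableAt),
      (auxProjCLM D).fderiv]
  have hproj : auxProjCLM D z = auxProjCLM D w := by
    funext M
    cases M with
    | inl i => exact hzw i
    | inr i => rfl
  rw [pd, pd, hder z, hder w, hproj]

lemma aux_pdUp_inl {D : ℕ} (f : DoubledSpace D → ℝ) (i : Fin D) (z : DoubledSpace D) :
    pdUp f (Sum.inl i) z = pd f (Sum.inr i) z := by
  rw [pdUp, Fintype.sum_sum_type]
  simp [eta, Finset.sum_ite_eq' Finset.univ i (fun j => pd f (Sum.inr j) z)]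

lemma aux_pdUp_inr {D : ℕ} (f : DoubledSpace D → ℝ) (i : Fin D) (z : DoubledSpace D) :
    pdUp f (Sum.inr i) z = pd f (Sum.inl i) z := by
  rw [pdUp, Fintype.sum_sum_type]
  simp [eta, Finset.sum_ite_eq' Finset.univ i (fun j => pd f (Sum.inl j) z)]

lemma aux_contDiff_pd {D : ℕ} {f : DoubledSpace D → ℝ} (hf : ContDiff ℝ (⊤ : ℕ∞) f)
    (N : DoubledIdx D) : ContDiff ℝ (⊤ : ℕ∞) (fun z => pd f N z) :=
  (hf.fderiv_right (by simp)).clm_apply contDiff_const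

/-- For a quasi-trivial parameter, the `inl` components vanish identically. -/
lemma aux_qt_inl {D : ℕ} {δ : Param D} (hδ : IsQuasiTrivial δ) (i : Fin D)
    (z : DoubledSpace D) : δ (Sum.inl i) z = 0 := by
  obtain ⟨n, ρ, σ, hρ, hσ, hδeq⟩ := hδ
  rw [hδeq]
  refine Finset.sum_eq_zero fun k _ => ?_
  rw [aux_pdUp_inl,
    aux_pd_inr_zero ((hσ k).1.differentiable (by simp) z) (hσ k).2 i,
    mul_zero]

/-- For a quasi-trivial parameter, `inr`-derivatives of `inr` components vanish. -/
lemma aux_qt_pd_inr {D : ℕ} {δ : Param D} (hδ : IsQuasiTrivial δ) (i j : Fin D)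
    (x : DoubledSpace D) : pd (δ (Sum.inr i)) (Sum.inr j) x = 0 := by
  obtain ⟨n, ρ, σ, hρ, hσ, hδeq⟩ := hδ
  have hfun : δ (Sum.inr i) = fun z => ∑ k, ρ k z * pd (σ k) (Sum.inl i) z := by
    funext z
    rw [hδeq]
    exact Finset.sum_congr rfl fun k _ => by rw [aux_pdUp_inr]
  rw [hfun]
  refine aux_pd_inr_zero ?_ ?_ j
  · refine DifferentiableAt.fun_sum fun k _ => DifferentiableAt.fun_mul ?_ ?_
    · exact (hρ k).1.differentiable (by simp) x
    · exact (aux_contDiff_pd (hσ k).1 (Sum.inl i)).differentiable (by simp) x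
  · intro z w hzw
    refine Finset.sum_congr rfl fun k _ => ?_
    rw [(hρ k).2 z w hzw, aux_pd_congr_inl (hσ k).1 (hσ k).2 (Sum.inl i) hzw]

/-- Index flip. -/
def auxFlip {D : ℕ} : DoubledIdx D → DoubledIdx D :=
  Sum.elim (fun i => Sum.inr i) (fun i => Sum.inl i)

lemma aux_etaT_apply {D : ℕ} (X : Matrix (DoubledIdx D) (DoubledIdx D) ℝ)
    (M N : DoubledIdx D) : etaT X M N = X (auxFlip N) (auxFlip M) := by
  rw [etaT]
  show (∑ P, ∑ Q, eta D M P * eta D N Q * X Q P) = _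
  have key : ∀ (K : DoubledIdx D) (g : DoubledIdx D → ℝ),
      (∑ P, eta D K P * g P) = g (auxFlip K) := by
    intro K g
    cases K with
    | inl a =>
      rw [Fintype.sum_sum_type]
      simp [eta, auxFlip, Finset.sum_ite_eq' Finset.univ a (fun j => g (Sum.inr j))]
    | inr a =>
      rw [Fintype.sum_sum_type]
      simp [eta, auxFlip, Finset.sum_ite_eq' Finset.univ a (fun j => g (Sum.inl j))]
  calc (∑ P, ∑ Q, eta D M P * eta D N Q * X Q P)
      = ∑ P, eta D M P * ∑ Q, eta D N Q * X Q P := by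
        refine Finset.sum_congr rfl fun P _ => ?_
        rw [Finset.mul_sum]
        exact Finset.sum_congr rfl fun Q _ => by ring
    _ = ∑ Q, eta D N Q * X Q (auxFlip M) := key M _
    _ = X (auxFlip N) (auxFlip M) := key N _

/-- Product formula for square-zero family. -/
lemma aux_prod_one_add {R : Type*} [Ring R] :
    ∀ {r : ℕ} (A : Fin r → R), (∀ i j, A i * A j = 0) →
      (List.ofFn (fun i => 1 + A i)).prod = 1 + ∑ i, A i := by
  intro r
  induction r with
  | zero => intro A _; simp
  | succ n ih =>
    intro A hA
    have htail : (List.ofFn fun i : Fin n => 1 + A i.succ).prod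
        = 1 + ∑ i : Fin n, A i.succ :=
      ih (fun i => A i.succ) (fun i j => hA i.succ j.succ)
    rw [List.ofFn_succ, List.prod_cons, htail, Fin.sum_univ_succ]
    have hz : A 0 * ∑ i : Fin n, A i.succ = 0 := by
      rw [Finset.mul_sum]
      exact Finset.sum_eq_zero fun i _ => hA 0 i.succ
    rw [mul_add, mul_one, add_mul, one_mul, hz, add_zero, add_assoc]

end AuxStmt5

/-- For finitely many quasi-trivial parameters δ_i with G_i = 1 + b_i − t(b_i), the
ordered product of the G_i equals 1 + Σ_i (b_i − t(b_i)), and also equals the matrix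
exponential of Σ_i (b_i − t(b_i)): this is G(δ₁)G(δ₂)⋯ = G(δ₁+δ₂+⋯). -/
theorem stmt_5 {D : ℕ} (r : ℕ) (δ : Fin r → Param D)
    (hδ : ∀ i, IsQuasiTrivial (δ i)) (x : DoubledSpace D)
    (b G : Fin r → Matrix (DoubledIdx D) (DoubledIdx D) ℝ)
    (hb : ∀ i, b i = Matrix.of fun M N => pd (δ i N) M x)
    (hG : ∀ i, G i = 1 + b i - etaT (b i)) :
    (List.ofFn G).prod = 1 + ∑ i, (b i - etaT (b i)) ∧
    (List.ofFn G).prod = NormedSpace.exp (∑ i, (b i - etaT (b i))) := by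
  set A : Fin r → Matrix (DoubledIdx D) (DoubledIdx D) ℝ :=
    fun i => b i - etaT (b i) with hA
  -- b has nonzero entries only in the (inl, inr) block
  have hbcol : ∀ i (M : DoubledIdx D) (j : Fin D), b i M (Sum.inl j) = 0 := by
    intro i M j
    rw [hb]
    show pd (δ i (Sum.inl j)) M x = 0
    have : δ i (Sum.inl j) = fun _ => 0 := funext fun z => aux_qt_inl (hδ i) j z
    rw [this]
    simp [pd]
  have hbrr : ∀ i (a c : Fin D), b i (Sum.inr a) (Sum.inr c) = 0 := by
    intro i a c
    rw [hb]
    exact aux_qt_pd_inr (hδ i) c a x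
  -- hence A i vanishes except in the (inl, inr) block
  have hAcol : ∀ i (M : DoubledIdx D) (j : Fin D), A i M (Sum.inl j) = 0 := by
    intro i M j
    rw [hA]
    show b i M (Sum.inl j) - etaT (b i) M (Sum.inl j) = 0
    rw [hbcol, aux_etaT_apply]
    cases M with
    | inl a => show 0 - b i (Sum.inr j) (Sum.inr a) = 0; rw [hbrr]; ring
    | inr a => show 0 - b i (Sum.inr j) (Sum.inl a) = 0; rw [hbcol]; ring
  have hArow : ∀ i (a : Fin D) (N : DoubledIdx D), A i (Sum.inr a) N = 0 := by
    intro i a N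
    cases N with
    | inl c => exact hAcol i (Sum.inr a) c
    | inr c =>
      rw [hA]
      show b i (Sum.inr a) (Sum.inr c) - etaT (b i) (Sum.inr a) (Sum.inr c) = 0
      rw [hbrr, aux_etaT_apply]
      show (0:ℝ) - b i (Sum.inl c) (Sum.inl a) = 0
      rw [hbcol]; ring
  -- products of the A's vanish
  have hAA : ∀ i j, A i * A j = 0 := by
    intro i j
    ext M N
    show ∑ K, A i M K * A j K N = 0
    refine Finset.sum_eq_zero fun K _ => ?_
    cases K with
    | inl c => rw [hAcol i M c, zero_mul]
    | inr a => rw [hArow j a N, mul_zero]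
  have hGfn : G = fun i => 1 + A i := by
    funext i
    rw [hG, hA, add_sub_assoc]
  have h1 : (List.ofFn G).prod = 1 + ∑ i, A i := by
    rw [hGfn]
    exact aux_prod_one_add A hAA
  refine ⟨h1, ?_⟩
  -- exponential of a square-zero element
  set X : Matrix (DoubledIdx D) (DoubledIdx D) ℝ := ∑ i, A i with hX
  have hX2 : X * X = 0 := by
    rw [hX, Finset.sum_mul_sum]
    exact Finset.sum_eq_zero fun i _ => Finset.sum_eq_zero fun j _ => hAA i j
  have hXn : ∀ n : ℕ, n ∉ ({0, 1} : Finset ℕ) →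
      ((Nat.factorial n : ℝ))⁻¹ • X ^ n = 0 := by
    intro n hn
    have h2 : 2 ≤ n := by
      rcases n with _ | _ | n
      · simp at hn
      · simp at hn
      · omega
    obtain ⟨m, rfl⟩ := Nat.exists_eq_add_of_le h2
    rw [pow_add, pow_two, hX2, zero_mul, smul_zero]
  rw [h1, NormedSpace.exp_eq_tsum (𝕂 := ℝ)]
  beta_reduce
  rw [tsum_eq_sum hXn]
  rw [Finset.sum_pair (by norm_num : (0:ℕ) ≠ 1)]
  simp
end

section
/- The C-bracket of a constrained smooth parameter with a quasi-trivial parameter is quasi-trivial: if ξ is a constrained smooth parameter on ℝ^(2D) and δ is quasi-trivial, then there exist finitely many constrained smooth functions ρ'_j, σ'_j such that [ξ, δ]_C^M = Σ_j ρ'_j ∂^M σ'_j at every point. -/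
open scoped BigOperators

-- flip
def flipIdx {D : ℕ} : DoubledIdx D → DoubledIdx D := Sum.elim Sum.inr Sum.inl

@[simp] lemma flipIdx_flipIdx {D : ℕ} (M : DoubledIdx D) : flipIdx (flipIdx M) = M := by
  cases M <;> rfl

lemma eta_eq {D : ℕ} (M N : DoubledIdx D) :
    eta D M N = if N = flipIdx M then 1 else 0 := by
  cases M <;> cases N <;> simp [eta, flipIdx, eq_comm]

lemma pdUp_eq {D : ℕ} (f : DoubledSpace D → ℝ) (M : DoubledIdx D) (x : DoubledSpace D) :
    pdUp f M x = pd f (flipIdx M) x := by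
  simp [pdUp, eta_eq, ite_mul]

-- projection
noncomputable def projL (D : ℕ) : DoubledSpace D →L[ℝ] DoubledSpace D :=
  ContinuousLinearMap.pi fun N =>
    Sum.rec (fun i => ContinuousLinearMap.proj (Sum.inl i)) (fun _ => 0) N

@[simp] lemma projL_inl {D : ℕ} (x : DoubledSpace D) (i : Fin D) :
    projL D x (Sum.inl i) = x (Sum.inl i) := rfl

@[simp] lemma projL_inr {D : ℕ} (x : DoubledSpace D) (i : Fin D) :
    projL D x (Sum.inr i) = 0 := rfl

lemma pd_eq_proj {D : ℕ} {f : DoubledSpace D → ℝ} (hf : IsConstrained f)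
    (N : DoubledIdx D) (x : DoubledSpace D) :
    pd f N x = fderiv ℝ f (projL D x) (projL D (Pi.single N 1)) := by
  have hcomp : f = f ∘ projL D := by
    funext y
    exact hf.2 y (projL D y) (fun i => (projL_inl y i).symm)
  have hd : DifferentiableAt ℝ f (projL D x) := (hf.1.differentiable (by simp)) _
  calc pd f N x = fderiv ℝ (f ∘ projL D) x (Pi.single N 1) := by rw [← hcomp]; rfl
    _ = ((fderiv ℝ f (projL D x)).comp (projL D)) (Pi.single N 1) := by
        rw [fderiv_comp x hd (projL D).differentiableAt, (projL D).fderiv]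
    _ = _ := rfl

lemma pd_inr {D : ℕ} {f : DoubledSpace D → ℝ} (hf : IsConstrained f)
    (i : Fin D) (x : DoubledSpace D) : pd f (Sum.inr i) x = 0 := by
  rw [pd_eq_proj hf]
  have : projL D (Pi.single (Sum.inr i) (1:ℝ)) = 0 := by
    funext N
    cases N with
    | inl j => simp [Pi.single_eq_of_ne]
    | inr j => simp
  rw [this, map_zero]

lemma contDiff_pd {D : ℕ} {f : DoubledSpace D → ℝ} (hf : ContDiff ℝ (⊤ : ℕ∞) f)
    (N : DoubledIdx D) : ContDiff ℝ (⊤ : ℕ∞) (pd f N) :=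
  (hf.fderiv_right (by simp)).clm_apply contDiff_const

lemma IsConstrained.pd {D : ℕ} {f : DoubledSpace D → ℝ} (hf : IsConstrained f)
    (N : DoubledIdx D) : IsConstrained (pd f N) := by
  refine ⟨contDiff_pd hf.1 N, fun x y h => ?_⟩
  have hxy : projL D x = projL D y := by
    funext K; cases K with
    | inl j => simpa using h j
    | inr j => simp
  rw [pd_eq_proj hf, pd_eq_proj hf, hxy]

lemma IsConstrained.mul {D : ℕ} {f g : DoubledSpace D → ℝ} (hf : IsConstrained f)
    (hg : IsConstrained g) : IsConstrained (fun x => f x * g x) :=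
  ⟨hf.1.mul hg.1, fun x y h => by simp only []; rw [hf.2 x y h, hg.2 x y h]⟩

lemma IsConstrained.sum {D : ℕ} {ι : Type*} [Fintype ι] {F : ι → DoubledSpace D → ℝ}
    (h : ∀ i, IsConstrained (F i)) : IsConstrained (fun x => ∑ i, F i x) :=
  ⟨ContDiff.sum fun i _ => (h i).1,
   fun x y hxy => Finset.sum_congr rfl fun i _ => (h i).2 x y hxy⟩

lemma IsConstrained.const_mul {D : ℕ} {f : DoubledSpace D → ℝ} (c : ℝ)
    (hf : IsConstrained f) : IsConstrained (fun x => c * f x) :=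
  ⟨contDiff_const.mul hf.1, fun x y h => by simp only []; rw [hf.2 x y h]⟩

-- strong constraint
lemma strong_constraint {D : ℕ} {A B : DoubledSpace D → ℝ} (hA : IsConstrained A)
    (hB : IsConstrained B) (x : DoubledSpace D) :
    ∑ P, pd A (flipIdx P) x * pd B P x = 0 := by
  rw [Fintype.sum_sum_type]
  simp [flipIdx, pd_inr hA, pd_inr hB]

-- derivative rules
lemma pd_mul {D : ℕ} {f g : DoubledSpace D → ℝ} (hf : ContDiff ℝ (⊤ : ℕ∞) f)
    (hg : ContDiff ℝ (⊤ : ℕ∞) g) (N : DoubledIdx D) (x : DoubledSpace D) :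
    pd (fun y => f y * g y) N x = pd f N x * g x + f x * pd g N x := by
  unfold pd
  rw [fderiv_fun_mul ((hf.differentiable (by simp)) x) ((hg.differentiable (by simp)) x)]
  simp [smul_eq_mul]
  ring

lemma pd_sum {D : ℕ} {ι : Type*} [Fintype ι] {F : ι → DoubledSpace D → ℝ}
    (h : ∀ i, ContDiff ℝ (⊤ : ℕ∞) (F i)) (N : DoubledIdx D) (x : DoubledSpace D) :
    pd (fun y => ∑ i, F i y) N x = ∑ i, pd (F i) N x := by
  unfold pd
  rw [fderiv_fun_sum fun i _ => ((h i).differentiable (by simp)) x]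
  simp

lemma pd_comm {D : ℕ} {f : DoubledSpace D → ℝ} (hf : ContDiff ℝ (⊤ : ℕ∞) f)
    (A B : DoubledIdx D) (x : DoubledSpace D) :
    pd (pd f A) B x = pd (pd f B) A x := by
  have hdiff : ∀ y, HasFDerivAt f (fderiv ℝ f y) y :=
    fun y => ((hf.differentiable (by simp)) y).hasFDerivAt
  have hd2 : DifferentiableAt ℝ (fderiv ℝ f) x :=
    ((hf.fderiv_right (m := (⊤ : ℕ∞)) (by simp)).differentiable (by simp)) x
  have hx : HasFDerivAt (fderiv ℝ f) (fderiv ℝ (fderiv ℝ f) x) x := hd2.hasFDerivAt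
  have key : ∀ V W : DoubledSpace D,
      fderiv ℝ (fun y => fderiv ℝ f y V) x W = fderiv ℝ (fderiv ℝ f) x W V := by
    intro V W
    rw [fderiv_clm_apply hd2 (differentiableAt_const V)]
    simp
  have e1 : pd (pd f A) B x = fderiv ℝ (fun y => fderiv ℝ f y (Pi.single A 1)) x (Pi.single B 1) := rfl
  have e2 : pd (pd f B) A x = fderiv ℝ (fun y => fderiv ℝ f y (Pi.single B 1)) x (Pi.single A 1) := rfl
  rw [e1, e2, key, key]
  exact second_derivative_symmetric hdiff hx _ _



lemma pdUpLow_eq {D : ℕ} (ξ : Param D) (M P : DoubledIdx D) (x : DoubledSpace D) :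
    pdUpLow ξ M P x = pd (ξ (flipIdx P)) (flipIdx M) x := by
  simp [pdUpLow, eta_eq, ite_mul, mul_ite]

def flipE (D : ℕ) : DoubledIdx D ≃ DoubledIdx D :=
  ⟨flipIdx, flipIdx, flipIdx_flipIdx, flipIdx_flipIdx⟩

/-- The C-bracket of a constrained smooth parameter with a quasi-trivial parameter is
quasi-trivial. -/
theorem stmt_7 {D : ℕ} (ξ δ : Param D)
    (hξ : IsConstrainedParam ξ) (hδ : IsQuasiTrivial δ) :
    ∃ (r : ℕ) (ρ' σ' : Fin r → (DoubledSpace D → ℝ)),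
      (∀ j, IsConstrained (ρ' j)) ∧ (∀ j, IsConstrained (σ' j)) ∧
      ∀ (M : DoubledIdx D) (x : DoubledSpace D),
        cbracket ξ δ M x = ∑ j, ρ' j x * pdUp (σ' j) M x := by
  obtain ⟨r, ρ, σ, hρ, hσ, hδeq⟩ := hδ
  have hδf : ∀ M, δ M = fun x => ∑ i, ρ i x * pd (σ i) (flipIdx M) x := by
    intro M; funext x; rw [hδeq]
    exact Finset.sum_congr rfl fun i _ => by rw [pdUp_eq]
  have hterm : ∀ (i : Fin r) M, ContDiff ℝ (⊤ : ℕ∞) (fun x => ρ i x * pd (σ i) (flipIdx M) x) :=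
    fun i M => (hρ i).1.mul (contDiff_pd (hσ i).1 _)
  have hpdδ : ∀ M P x, pd (δ M) P x =
      ∑ i, (pd (ρ i) P x * pd (σ i) (flipIdx M) x
        + ρ i x * pd (pd (σ i) (flipIdx M)) P x) := by
    intro M P x
    rw [hδf M, pd_sum (fun i => hterm i M)]
    exact Finset.sum_congr rfl fun i _ => pd_mul (hρ i).1 (contDiff_pd (hσ i).1 _) P x
  have hxid : ∀ f, IsConstrained f → IsConstrained (xid ξ f) := by
    intro f hf
    exact IsConstrained.sum (F := fun P x => ξ P x * pd f P x)
      (fun P => (hξ P).mul (hf.pd P))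
  -- witnesses
  set Pr : (Fin r ⊕ (Fin r ⊕ Fin r)) → ((DoubledSpace D → ℝ) × (DoubledSpace D → ℝ)) :=
    Sum.elim (fun i => (xid ξ (ρ i), σ i))
      (Sum.elim (fun i => (fun x => (1/2 : ℝ) * ρ i x, xid ξ (σ i)))
        (fun i => (fun x => -(1/2 : ℝ) * xid ξ (σ i) x, ρ i))) with hPr
  set e : (Fin r ⊕ (Fin r ⊕ Fin r)) ≃ Fin (r + (r + r)) :=
    (Equiv.sumCongr (Equiv.refl (Fin r)) finSumFinEquiv).trans finSumFinEquiv with he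
  refine ⟨r + (r + r), fun j => (Pr (e.symm j)).1, fun j => (Pr (e.symm j)).2, ?_, ?_, ?_⟩
  · intro j
    rcases hj : e.symm j with i | i | i <;>
      simp only [hj, hPr, Sum.elim_inl, Sum.elim_inr]
    · exact hxid _ (hρ i)
    · exact (hρ i).const_mul (1/2)
    · exact (hxid _ (hσ i)).const_mul (-(1/2))
  · intro j
    rcases hj : e.symm j with i | i | i <;>
      simp only [hj, hPr, Sum.elim_inl, Sum.elim_inr]
    · exact hσ i
    · exact hxid _ (hσ i)
    · exact hρ i
  intro M x
  -- RHS simplification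
  have hRHS : ∑ j, (Pr (e.symm j)).1 x * pdUp (Pr (e.symm j)).2 M x =
      (∑ i, xid ξ (ρ i) x * pd (σ i) (flipIdx M) x)
      + ((∑ i, (1/2 : ℝ) * ρ i x * pd (xid ξ (σ i)) (flipIdx M) x)
        + (∑ i, (-(1/2 : ℝ) * xid ξ (σ i) x) * pd (ρ i) (flipIdx M) x)) := by
    rw [Fintype.sum_equiv e.symm
      (fun j => (Pr (e.symm j)).1 x * pdUp (Pr (e.symm j)).2 M x)
      (fun p => (Pr p).1 x * pdUp (Pr p).2 M x) (fun j => rfl)]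
    rw [Fintype.sum_sum_type, Fintype.sum_sum_type]
    simp only [hPr, Sum.elim_inl, Sum.elim_inr, pdUp_eq]
  rw [hRHS]
  -- LHS pieces
  have E2 : ∑ P, δ P x * pd (ξ M) P x = 0 := by
    have h1 : ∀ P : DoubledIdx D, δ P x * pd (ξ M) P x
        = ∑ i, ρ i x * (pd (σ i) (flipIdx P) x * pd (ξ M) P x) := by
      intro P; rw [hδf P]; simp only []
      rw [Finset.sum_mul]
      exact Finset.sum_congr rfl fun i _ => by ring
    rw [Finset.sum_congr rfl (fun P _ => h1 P), Finset.sum_comm]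
    refine Finset.sum_eq_zero fun i _ => ?_
    rw [← Finset.mul_sum, strong_constraint (hσ i) (hξ M) x, mul_zero]
  have E1 : ∑ P, ξ P x * pd (δ M) P x =
      ∑ i, (xid ξ (ρ i) x * pd (σ i) (flipIdx M) x
        + ρ i x * ∑ P, ξ P x * pd (pd (σ i) (flipIdx M)) P x) := by
    have h1 : ∀ P : DoubledIdx D, ξ P x * pd (δ M) P x
        = ∑ i, (ξ P x * pd (ρ i) P x * pd (σ i) (flipIdx M) x
            + ρ i x * (ξ P x * pd (pd (σ i) (flipIdx M)) P x)) := by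
      intro P; rw [hpdδ M P x, Finset.mul_sum]
      exact Finset.sum_congr rfl fun i _ => by ring
    rw [Finset.sum_congr rfl (fun P _ => h1 P), Finset.sum_comm]
    refine Finset.sum_congr rfl fun i _ => ?_
    rw [Finset.sum_add_distrib, ← Finset.mul_sum, ← Finset.sum_mul]
    rfl
  have E3 : ∑ P, ξ P x * pdUpLow δ M P x =
      ∑ i, (xid ξ (σ i) x * pd (ρ i) (flipIdx M) x
        + ρ i x * ∑ P, ξ P x * pd (pd (σ i) P) (flipIdx M) x) := by
    have h1 : ∀ P : DoubledIdx D, ξ P x * pdUpLow δ M P x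
        = ∑ i, (ξ P x * pd (σ i) P x * pd (ρ i) (flipIdx M) x
            + ρ i x * (ξ P x * pd (pd (σ i) P) (flipIdx M) x)) := by
      intro P
      rw [pdUpLow_eq, hpdδ (flipIdx P) (flipIdx M) x, Finset.mul_sum]
      exact Finset.sum_congr rfl fun i _ => by rw [flipIdx_flipIdx]; ring
    rw [Finset.sum_congr rfl (fun P _ => h1 P), Finset.sum_comm]
    refine Finset.sum_congr rfl fun i _ => ?_
    rw [Finset.sum_add_distrib, ← Finset.mul_sum, ← Finset.sum_mul]
    rfl
  have E4 : ∑ P, δ P x * pdUpLow ξ M P x =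
      ∑ i, ρ i x * ∑ P, pd (σ i) P x * pd (ξ P) (flipIdx M) x := by
    have h1 : ∀ P : DoubledIdx D, δ P x * pdUpLow ξ M P x
        = ∑ i, ρ i x * (pd (σ i) (flipIdx P) x * pd (ξ (flipIdx P)) (flipIdx M) x) := by
      intro P; rw [hδf P, pdUpLow_eq]; simp only []
      rw [Finset.sum_mul]
      exact Finset.sum_congr rfl fun i _ => by ring
    rw [Finset.sum_congr rfl (fun P _ => h1 P), Finset.sum_comm]
    refine Finset.sum_congr rfl fun i _ => ?_
    rw [← Finset.mul_sum]
    congr 1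
    have := Equiv.sum_comp (flipE D)
      (fun P => pd (σ i) P x * pd (ξ P) (flipIdx M) x)
    simp only [flipE, Equiv.coe_fn_mk] at this
    exact this
  have Epdxid : ∀ i : Fin r, pd (xid ξ (σ i)) (flipIdx M) x =
      (∑ P, pd (ξ P) (flipIdx M) x * pd (σ i) P x)
      + ∑ P, ξ P x * pd (pd (σ i) P) (flipIdx M) x := by
    intro i
    have h0 : xid ξ (σ i) = fun y => ∑ P, ξ P y * pd (σ i) P y := rfl
    rw [h0, pd_sum (fun P => (hξ P).1.mul (contDiff_pd (hσ i).1 P))]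
    rw [← Finset.sum_add_distrib]
    exact Finset.sum_congr rfl fun P _ =>
      pd_mul (hξ P).1 (contDiff_pd (hσ i).1 P) (flipIdx M) x
  have Ecomm : ∀ i : Fin r, ∑ P, ξ P x * pd (pd (σ i) (flipIdx M)) P x
      = ∑ P, ξ P x * pd (pd (σ i) P) (flipIdx M) x :=
    fun i => Finset.sum_congr rfl fun P _ => by rw [pd_comm (hσ i).1]
  -- assemble
  show (∑ P, ξ P x * pd (δ M) P x) - (∑ P, δ P x * pd (ξ M) P x)
      - (1/2) * ∑ P, (ξ P x * pdUpLow δ M P x - δ P x * pdUpLow ξ M P x) = _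
  rw [Finset.sum_sub_distrib, E1, E2, E3, E4, sub_zero]
  rw [← Finset.sum_sub_distrib, Finset.mul_sum, ← Finset.sum_sub_distrib,
    ← Finset.sum_add_distrib, ← Finset.sum_add_distrib]
  refine Finset.sum_congr rfl fun i _ => ?_
  rw [Ecomm i, Epdxid i]
  have hD : ∑ P, pd (ξ P) (flipIdx M) x * pd (σ i) P x
      = ∑ P, pd (σ i) P x * pd (ξ P) (flipIdx M) x :=
    Finset.sum_congr rfl fun P _ => by ring
  rw [hD]
  ring
end

section
/- Let n ∈ ℕ and let B, A, a, η be n×n real matrices with η symmetric and η·η = 1; write t(X) := η·Xᵀ·η. Assume t(B) is invertible and that t(B)⁻¹·A = A, t(B)⁻¹·a = a, and t(B)⁻¹·B = B + t(B)⁻¹ − 1. Define F := ½( B·t(B)⁻¹ + t(B)⁻¹·B ). Then F·( A·t(a) − a·t(A) ) = B·( A·t(a) − a·t(A) ). -/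
open scoped BigOperators

/-- Under the strong-constraint matrix identities t(B)⁻¹A = A, t(B)⁻¹a = a and
t(B)⁻¹B = B + t(B)⁻¹ − 1, the matrix F = ½(B t(B)⁻¹ + t(B)⁻¹ B) satisfies
F(A t(a) − a t(A)) = B(A t(a) − a t(A)). -/
theorem stmt_11 (n : ℕ) (B A a η : Matrix (Fin n) (Fin n) ℝ)
    (hηsymm : η.transpose = η) (hη2 : η * η = 1)
    (hBinv : IsUnit (η * B.transpose * η))
    (hA : (η * B.transpose * η)⁻¹ * A = A)
    (ha : (η * B.transpose * η)⁻¹ * a = a)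
    (hB : (η * B.transpose * η)⁻¹ * B = B + (η * B.transpose * η)⁻¹ - 1)
    (F : Matrix (Fin n) (Fin n) ℝ)
    (hF : F = (1/2 : ℝ) • (B * (η * B.transpose * η)⁻¹ + (η * B.transpose * η)⁻¹ * B)) :
    F * (A * (η * a.transpose * η) - a * (η * A.transpose * η))
      = B * (A * (η * a.transpose * η) - a * (η * A.transpose * η)) := by
  set T := (η * B.transpose * η)⁻¹ with hT
  set S := A * (η * a.transpose * η) - a * (η * A.transpose * η) with hS
  have hTS : T * S = S := by
    rw [hS, Matrix.mul_sub, ← Matrix.mul_assoc T A, hA, ← Matrix.mul_assoc T a, ha]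
  have h1 : F * S = (1/2:ℝ) • (B * (T * S) + (T * B) * S) := by
    rw [hF, Matrix.smul_mul, Matrix.add_mul, Matrix.mul_assoc]
  rw [h1, hTS, hB, Matrix.sub_mul, Matrix.add_mul, Matrix.one_mul, hTS,
    add_sub_cancel_right, ← two_smul ℝ, smul_smul]
  norm_num
end
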